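/- Let T be a finite tree with deg(T) ≥ 2 and let λ satisfy 1/(2·(|E(T)|−1)·deg(T)) ≤ λ < 1. Then F₁(T)(λ) − F₁(T)(0) ≤ 2·|E(T)|·deg(T)·λ. -/

import Mathlib

open scoped RealInnerProductSpace

variable {V E : Type*}

noncomputable def c1 [Fintype E] [DecidableEq V] (v0 v1 : E → V) :
    EuclideanSpace ℝ E →ₗ[ℝ] EuclideanSpace ℝ V where
  toFun a := WithLp.toLp 2 (fun v =>
    (∑ e ∈ Finset.univ.filter (fun e => v1 e = v), a e)
      - (∑ e ∈ Finset.univ.filter (fun e => v0 e = v), a e))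
  map_add' a b := by
    ext v
    simp [PiLp.add_apply, Finset.sum_add_distrib] <;>
    ring
  map_smul' c a := by
    ext v
    simp [PiLp.smul_apply, smul_eq_mul, ← Finset.mul_sum, mul_sub]

/-- Spectral density function of a linear map of inner product spaces. -/
noncomputable def sdf {V W : Type*} [NormedAddCommGroup V] [InnerProductSpace ℝ V]
    [NormedAddCommGroup W] [InnerProductSpace ℝ W]
    (f : V →ₗ[ℝ] W) (lam : ℝ) : ℕ :=
  sSup {n : ℕ | ∃ U : Submodule ℝ V, Module.finrank ℝ U = n ∧ ∀ v ∈ U, ‖f v‖ ≤ lam * ‖v‖}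

/-- Degree of a vertex in a finite directed multigraph (loops count twice). -/
def vdeg [Fintype E] [DecidableEq V] (v0 v1 : E → V) (v : V) : ℕ :=
  (Finset.univ.filter fun e => v0 e = v).card + (Finset.univ.filter fun e => v1 e = v).card

/-- Maximal vertex degree of a finite multigraph. -/
def maxDeg [Fintype V] [Fintype E] [DecidableEq V] (v0 v1 : E → V) : ℕ :=
  Finset.univ.sup (vdeg v0 v1)

/-- The simple graph underlying a directed multigraph. -/
def supportGraph (v0 v1 : E → V) : SimpleGraph V where
  Adj u w := u ≠ w ∧ ∃ e, (v0 e = u ∧ v1 e = w) ∨ (v0 e = w ∧ v1 e = u)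
  symm := by
    constructor
    rintro u w ⟨h, e, he⟩
    exact ⟨h.symm, e, he.symm⟩
  loopless := by constructor; rintro u ⟨h, _⟩; exact h rfl

/-!
Root the tree and let `U` be a subspace of dimension `n ≥ 1` on which `‖c₁ x‖ ≤ λ‖x‖`; write
`m = |E(T)|` and `d = deg(T)`. Cutting greedily at a deepest vertex whose subtree still has at
least `⌊m/n⌋ + 1` vertices removes fewer than `n` edges and leaves trees with at most `Q + 1`
vertices, `Q = d⌊m/n⌋`, so some `x ≠ 0` in `U` vanishes on the removed edges. In the cut forest
the value of `x` on the edge above `w` is `±∑ c₁ x` over the subtree of `w`, and every vertex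
lies below at most `Q` non-roots, so Cauchy–Schwarz gives `‖x‖ ≤ Q‖c₁ x‖ ≤ Qλ‖x‖`. Hence
`1 ≤ Qλ` and `n ≤ nQλ ≤ mdλ`.
-/

open Finset Function

section RootedForest

variable {V : Type*} {par : V → V} {dep : V → ℕ} {u v w ρ : V}

/-- `par` is the parent map of a rooted forest whose roots are the fixed points of `par`;
`dep` drops along every non-root parent step, which excludes cycles. -/
def IsRootedForest (par : V → V) (dep : V → ℕ) : Prop :=
  ∀ v, par v = v ∨ dep (par v) < dep v

def rootOf (par : V → V) (dep : V → ℕ) (v : V) : V := par^[dep v] v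

lemma rootOf_eq_self (h : par v = v) : rootOf par dep v = v := iterate_fixed h _

namespace IsRootedForest

lemma dep_parent_le (hf : IsRootedForest par dep) (v : V) : dep (par v) ≤ dep v := by
  rcases hf v with h | h
  · rw [h]
  · exact h.le

lemma dep_iterate_le (hf : IsRootedForest par dep) (v : V) (j : ℕ) :
    dep (par^[j] v) ≤ dep v := by
  induction j generalizing v with
  | zero => exact le_rfl
  | succ j ih => exact (ih (par v)).trans (hf.dep_parent_le v)

lemma parent_iterate_fixed (hf : IsRootedForest par dep) {j : ℕ} (h : dep v ≤ j) :
    par (par^[j] v) = par^[j] v := by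
  induction j generalizing v with
  | zero =>
    rcases hf v with hv | hv
    · exact hv
    · omega
  | succ j ih =>
    rcases hf v with hv | hv
    · rw [iterate_fixed hv, hv]
    · exact ih (by omega)

lemma rootOf_fixed (hf : IsRootedForest par dep) (v : V) :
    par (rootOf par dep v) = rootOf par dep v :=
  hf.parent_iterate_fixed le_rfl

lemma iterate_eq_rootOf (hf : IsRootedForest par dep) {j : ℕ} (h : dep v ≤ j) :
    par^[j] v = rootOf par dep v := by
  rw [← Nat.sub_add_cancel h, iterate_add_apply]
  exact iterate_fixed (hf.rootOf_fixed v) _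

lemma rootOf_parent (hf : IsRootedForest par dep) (v : V) :
    rootOf par dep (par v) = rootOf par dep v := by
  calc rootOf par dep (par v) = par^[dep v] (par v) :=
        (hf.iterate_eq_rootOf (hf.dep_parent_le v)).symm
    _ = par (rootOf par dep v) := by rw [← iterate_succ_apply, iterate_succ_apply']; rfl
    _ = rootOf par dep v := hf.rootOf_fixed v

lemma rootOf_iterate (hf : IsRootedForest par dep) (v : V) (j : ℕ) :
    rootOf par dep (par^[j] v) = rootOf par dep v := by
  induction j generalizing v with
  | zero => rfl
  | succ j ih => rw [iterate_succ_apply, ih, hf.rootOf_parent]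

end IsRootedForest

section Subtree

variable [Fintype V]

open Classical in
noncomputable def subtree (par : V → V) (u : V) : Finset V :=
  univ.filter fun v => ∃ j, par^[j] v = u

lemma mem_subtree : v ∈ subtree par u ↔ ∃ j, par^[j] v = u := by simp [subtree]

lemma self_mem_subtree (u : V) : u ∈ subtree par u := mem_subtree.2 ⟨0, rfl⟩

lemma mem_subtree_of_parent_mem (h : par v ∈ subtree par u) : v ∈ subtree par u := by
  obtain ⟨j, hj⟩ := mem_subtree.1 h
  exact mem_subtree.2 ⟨j + 1, hj⟩

lemma mem_subtree_iff_parent_mem (hne : v ≠ u) :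
    v ∈ subtree par u ↔ par v ∈ subtree par u := by
  refine ⟨fun h => ?_, mem_subtree_of_parent_mem⟩
  obtain ⟨_ | j, hj⟩ := mem_subtree.1 h
  · exact absurd hj hne
  · exact mem_subtree.2 ⟨j, hj⟩

namespace IsRootedForest

lemma dep_lt_of_mem_subtree (hf : IsRootedForest par dep) (h : v ∈ subtree par u)
    (hne : v ≠ u) : dep u < dep v := by
  obtain ⟨_ | j, hj⟩ := mem_subtree.1 h
  · exact absurd hj hne
  · have hpv : par v ≠ v := fun hfix => hne (by rwa [iterate_fixed hfix] at hj)
    rw [← hj]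
    exact (hf.dep_iterate_le (par v) j).trans_lt ((hf v).resolve_left hpv)

lemma parent_not_mem_subtree (hf : IsRootedForest par dep) (h : par u ≠ u) :
    par u ∉ subtree par u := fun hmem =>
  (hf.dep_lt_of_mem_subtree hmem h).not_gt ((hf u).resolve_left h)

lemma rootOf_eq_of_mem_subtree (hf : IsRootedForest par dep) (h : v ∈ subtree par u) :
    rootOf par dep v = rootOf par dep u := by
  obtain ⟨j, hj⟩ := mem_subtree.1 h
  rw [← hj, hf.rootOf_iterate]

end IsRootedForest

end Subtree

variable [DecidableEq V] {K : Finset V}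

def cut (K : Finset V) (par : V → V) : V → V := fun v => if v ∈ K then v else par v

lemma cut_ne_self_iff : cut K par v ≠ v ↔ v ∉ K ∧ par v ≠ v := by
  by_cases h : v ∈ K <;> simp [cut, h]

lemma cut_empty : cut ∅ par = par := by
  funext v; simp [cut]

lemma cut_cut (K' : Finset V) : cut K' (cut K par) = cut (K ∪ K') par := by
  funext v
  by_cases h : v ∈ K <;> by_cases h' : v ∈ K' <;> simp [cut, h, h']

lemma IsRootedForest.isRootedForest_cut (hf : IsRootedForest par dep) (K : Finset V) :
    IsRootedForest (cut K par) dep := by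
  intro v
  by_cases hv : v ∈ K
  · simp [cut, hv]
  · simpa [cut, hv] using hf v

variable [Fintype V] {d s : ℕ}

def nonroots (par : V → V) : Finset V := univ.filter fun v => par v ≠ v

def children (par : V → V) (v : V) : Finset V := univ.filter fun w => par w = v ∧ w ≠ v

def treeOf (par : V → V) (dep : V → ℕ) (ρ : V) : Finset V :=
  univ.filter fun v => rootOf par dep v = ρ

lemma mem_nonroots : v ∈ nonroots par ↔ par v ≠ v := by simp [nonroots]

lemma mem_children : w ∈ children par v ↔ par w = v ∧ w ≠ v := by simp [children]

lemma mem_treeOf : v ∈ treeOf par dep ρ ↔ rootOf par dep v = ρ := by simp [treeOf]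

lemma treeOf_subset_subtree : treeOf par dep ρ ⊆ subtree par ρ :=
  fun v hv => mem_subtree.2 ⟨dep v, mem_treeOf.1 hv⟩

lemma exists_child_of_mem_subtree (h : v ∈ subtree par u) (hne : v ≠ u) :
    ∃ c ∈ children par u, v ∈ subtree par c := by
  obtain ⟨j, hj⟩ := mem_subtree.1 h
  induction j generalizing v with
  | zero => exact absurd hj hne
  | succ j ih =>
    by_cases hpv : par v = u
    · exact ⟨v, mem_children.2 ⟨hpv, hne⟩, self_mem_subtree v⟩
    · obtain ⟨c, hc, hvc⟩ := ih (mem_subtree.2 ⟨j, hj⟩) hpv hj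
      exact ⟨c, hc, mem_subtree_of_parent_mem hvc⟩

lemma card_subtree_le (hch : ∀ c ∈ children par u, (subtree par c).card ≤ s) :
    (subtree par u).card ≤ 1 + (children par u).card * s := by
  have hsub : subtree par u ⊆ insert u ((children par u).biUnion (subtree par)) := by
    intro v hv
    by_cases hvu : v = u
    · exact hvu ▸ mem_insert_self _ _
    · obtain ⟨c, hc, hvc⟩ := exists_child_of_mem_subtree hv hvu
      exact mem_insert_of_mem (mem_biUnion.2 ⟨c, hc, hvc⟩)
  calc (subtree par u).card ≤ (insert u ((children par u).biUnion (subtree par))).card :=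
        card_le_card hsub
    _ ≤ 1 + ∑ c ∈ children par u, (subtree par c).card := by
        rw [add_comm]; exact (card_insert_le _ _).trans (by gcongr; exact card_biUnion_le)
    _ ≤ 1 + (children par u).card * s := by
        gcongr; simpa using sum_le_sum hch

lemma nonroots_cut : nonroots (cut K par) = nonroots par \ K := by
  ext v; simp [mem_nonroots, cut_ne_self_iff, and_comm]

lemma children_cut_subset : children (cut K par) v ⊆ children par v := by
  intro w hw
  rw [mem_children] at hw ⊢
  by_cases hwK : w ∈ K
  · simp only [cut, hwK, if_true] at hw; exact absurd hw.1 hw.2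
  · simpa [cut, hwK] using hw

lemma subtree_cut_subset : subtree (cut K par) u ⊆ subtree par u := by
  intro v hv
  obtain ⟨j, hj⟩ := mem_subtree.1 hv
  induction j generalizing v with
  | zero => exact hj ▸ self_mem_subtree v
  | succ j ih =>
    rw [iterate_succ_apply] at hj
    by_cases hvK : v ∈ K
    · simp only [cut, hvK, if_true] at hj; exact ih (mem_subtree.2 ⟨j, hj⟩) hj
    · simp only [cut, hvK, if_false] at hj
      exact mem_subtree_of_parent_mem (ih (mem_subtree.2 ⟨j, hj⟩) hj)

lemma mem_subtree_cut (hK : ∀ w ∈ K, w ∈ subtree par u → w = u) (h : v ∈ subtree par u) :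
    v ∈ subtree (cut K par) u := by
  obtain ⟨j, hj⟩ := mem_subtree.1 h
  induction j generalizing v with
  | zero => exact hj ▸ self_mem_subtree v
  | succ j ih =>
    have hpv := ih (mem_subtree.2 ⟨j, hj⟩) hj
    by_cases hvK : v ∈ K
    · exact hK v hvK h ▸ self_mem_subtree v
    · exact mem_subtree_of_parent_mem (by simpa [cut, hvK] using hpv)

namespace IsRootedForest

lemma treeOf_eq_subtree (hf : IsRootedForest par dep) (hρ : par ρ = ρ) :
    treeOf par dep ρ = subtree par ρ := by
  refine subset_antisymm treeOf_subset_subtree fun v hv => mem_treeOf.2 ?_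
  rw [hf.rootOf_eq_of_mem_subtree hv, rootOf_eq_self hρ]

lemma treeOf_eq_empty (hf : IsRootedForest par dep) (hρ : par ρ ≠ ρ) :
    treeOf par dep ρ = ∅ :=
  eq_empty_of_forall_notMem fun v hv => hρ (mem_treeOf.1 hv ▸ hf.rootOf_fixed v)

lemma mem_treeOf_erase_rootOf (hf : IsRootedForest par dep) (hw : par w ≠ w) :
    w ∈ (treeOf par dep (rootOf par dep w)).erase (rootOf par dep w) :=
  mem_erase.2 ⟨fun h => hw (h ▸ hf.rootOf_fixed w), mem_treeOf.2 rfl⟩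

lemma card_treeOf_le (hf : IsRootedForest par dep) (hd : ∀ v, (children par v).card ≤ d)
    (hsmall : ∀ v, par v ≠ v → (subtree par v).card < s) (ρ : V) :
    (treeOf par dep ρ).card ≤ 1 + d * (s - 1) := by
  by_cases hρ : par ρ = ρ
  · rw [hf.treeOf_eq_subtree hρ]
    refine (card_subtree_le fun c hc => ?_).trans (by gcongr; exact hd ρ)
    obtain ⟨hpc, hcρ⟩ := mem_children.1 hc
    have := hsmall c (hpc.trans_ne (Ne.symm hcρ))
    omega
  · simp [hf.treeOf_eq_empty hρ]

lemma subtree_subset_treeOf_cut (hf : IsRootedForest par dep) (hu : u ∈ K)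
    (hK : ∀ w ∈ K, w ∈ subtree par u → w = u) :
    subtree par u ⊆ treeOf (cut K par) dep u := by
  intro v hv
  rw [mem_treeOf, (hf.isRootedForest_cut K).rootOf_eq_of_mem_subtree (mem_subtree_cut hK hv)]
  exact rootOf_eq_self (by simp [cut, hu])

end IsRootedForest

end RootedForest

section Cutting

variable {V : Type*} [Fintype V] [DecidableEq V] {par : V → V} {dep : V → ℕ} {K : Finset V}
  {d s : ℕ}

/-- Greedy cutting: cut off a deepest vertex whose subtree has at least `s` vertices and
recurse; every cut vertex keeps a tree of at least `s` vertices, and in the end every tree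
consists of a root and fewer than `s` vertices below each of its at most `d` children. -/
lemma IsRootedForest.exists_cut (hf : IsRootedForest par dep)
    (hd : ∀ v, (children par v).card ≤ d) (s : ℕ) :
    ∃ K : Finset V, (∀ u ∈ K, par u ≠ u) ∧
      (∀ u ∈ K, s ≤ (treeOf (cut K par) dep u).card) ∧
      ∀ ρ, (treeOf (cut K par) dep ρ).card ≤ 1 + d * (s - 1) := by
  induction hn : (nonroots par).card using Nat.strong_induction_on generalizing par with
  | _ n ih =>
    by_cases hsmall : ∀ v, par v ≠ v → (subtree par v).card < s
    · exact ⟨∅, by simp, by simp, by simpa [cut_empty] using hf.card_treeOf_le hd hsmall⟩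
    push Not at hsmall
    obtain ⟨u, hu, hmax⟩ := exists_max_image
      (univ.filter fun v => par v ≠ v ∧ s ≤ (subtree par v).card) dep
      (by simpa [Finset.Nonempty] using hsmall)
    simp only [mem_filter, mem_univ, true_and] at hu hmax
    have hlt : (nonroots (cut {u} par)).card < n := by
      rw [← hn, nonroots_cut]
      exact card_lt_card (sdiff_ssubset (by simpa [mem_nonroots] using hu.1) (by simp))
    obtain ⟨K, hKroot, hKbig, hKsmall⟩ := ih _ hlt (hf.isRootedForest_cut {u})
      (fun v => (card_le_card children_cut_subset).trans (hd v)) rfl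
    rw [cut_cut] at hKbig hKsmall
    have hK : ∀ w ∈ {u} ∪ K, w ∈ subtree par u → w = u := by
      intro w hw hwu
      by_contra hne
      have hwK : w ∈ K := by simpa [hne] using hw
      have hw_root : par w ≠ w := (cut_ne_self_iff.1 (hKroot w hwK)).2
      have hw_small : (subtree par w).card < s := by
        by_contra! hbig
        exact (hf.dep_lt_of_mem_subtree hwu hne).not_ge (hmax w ⟨hw_root, hbig⟩)
      exact (hKbig w hwK).not_gt
        ((card_le_card (treeOf_subset_subtree.trans subtree_cut_subset)).trans_lt hw_small)
    refine ⟨{u} ∪ K, fun w hw => ?_, fun w hw => ?_, hKsmall⟩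
    · rcases mem_union.1 hw with hw | hw
      · exact mem_singleton.1 hw ▸ hu.1
      · exact (cut_ne_self_iff.1 (hKroot w hw)).2
    · rcases mem_union.1 hw with hw | hw
      · rw [mem_singleton.1 hw]
        exact hu.2.trans (card_le_card (hf.subtree_subset_treeOf_cut (by simp) hK))
      · exact hKbig w hw

lemma card_mul_le_card_nonroots (hK : ∀ u ∈ K, par u ≠ u)
    (hKs : ∀ u ∈ K, s ≤ (treeOf (cut K par) dep u).card) :
    K.card * s ≤ (nonroots par).card := by
  have hdisj : (K : Set V).PairwiseDisjoint (treeOf (cut K par) dep) := by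
    intro u _ u' _ hne
    refine disjoint_left.2 fun v hv hv' => hne ?_
    rw [mem_treeOf] at hv hv'
    exact hv ▸ hv'
  have hsub : K.biUnion (treeOf (cut K par) dep) ⊆ nonroots par := by
    intro v hv
    obtain ⟨u, hu, hvu⟩ := mem_biUnion.1 hv
    rw [mem_nonroots]
    intro hpv
    have hcut : cut K par v = v := by by_cases hvK : v ∈ K <;> simp [cut, hvK, hpv]
    rw [mem_treeOf, rootOf_eq_self hcut] at hvu
    exact hK u hu (hvu ▸ hpv)
  calc K.card * s = ∑ _u ∈ K, s := by rw [sum_const, smul_eq_mul]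
    _ ≤ ∑ u ∈ K, (treeOf (cut K par) dep u).card := sum_le_sum hKs
    _ = (K.biUnion (treeOf (cut K par) dep)).card := (card_biUnion hdisj).symm
    _ ≤ (nonroots par).card := card_le_card hsub

theorem IsRootedForest.exists_cut_card_mul_le (hf : IsRootedForest par dep)
    (hd : ∀ v, (children par v).card ≤ d) (s : ℕ) :
    ∃ K : Finset V, K.card * s ≤ (nonroots par).card ∧
      ∀ ρ, (treeOf (cut K par) dep ρ).card ≤ 1 + d * (s - 1) := by
  obtain ⟨K, hKroot, hKbig, hKsmall⟩ := hf.exists_cut hd s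
  exact ⟨K, card_mul_le_card_nonroots hKroot hKbig, hKsmall⟩

end Cutting

section SmallTrees

variable {V : Type*} [Fintype V] [DecidableEq V] {par : V → V} {dep : V → ℕ} {Q : ℕ}

namespace IsRootedForest

lemma card_erase_rootOf_le (hf : IsRootedForest par dep)
    (hQ : ∀ ρ, (treeOf par dep ρ).card ≤ Q + 1) (v : V) :
    ((treeOf par dep (rootOf par dep v)).erase (rootOf par dep v)).card ≤ Q := by
  have hρ := mem_treeOf.2 (rootOf_eq_self (dep := dep) (hf.rootOf_fixed v))
  have := hQ (rootOf par dep v)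
  rw [card_erase_of_mem hρ]
  omega

lemma card_subtree_le_of_card_treeOf_le (hf : IsRootedForest par dep)
    (hQ : ∀ ρ, (treeOf par dep ρ).card ≤ Q + 1) {w : V} (hw : par w ≠ w) :
    (subtree par w).card ≤ Q := by
  refine le_trans (card_le_card fun v hv => ?_) (hf.card_erase_rootOf_le hQ w)
  have hvρ : rootOf par dep v = rootOf par dep w := hf.rootOf_eq_of_mem_subtree hv
  refine mem_erase.2 ⟨fun hv' => hw ?_, mem_treeOf.2 hvρ⟩
  have hfix : par v = v := hv' ▸ hf.rootOf_fixed w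
  obtain ⟨j, hj⟩ := mem_subtree.1 hv
  rw [iterate_fixed hfix] at hj
  exact hj ▸ hfix

lemma card_ancestors_le_of_card_treeOf_le (hf : IsRootedForest par dep)
    (hQ : ∀ ρ, (treeOf par dep ρ).card ≤ Q + 1) (v : V) :
    ((nonroots par).filter fun w => v ∈ subtree par w).card ≤ Q := by
  refine le_trans (card_le_card fun w hw => ?_) (hf.card_erase_rootOf_le hQ v)
  obtain ⟨hw, hvw⟩ := mem_filter.1 hw
  rw [hf.rootOf_eq_of_mem_subtree hvw]
  exact hf.mem_treeOf_erase_rootOf (mem_nonroots.1 hw)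

lemma sum_sum_subtree_le (hf : IsRootedForest par dep)
    (hQ : ∀ ρ, (treeOf par dep ρ).card ≤ Q + 1) (f : V → ℝ) (hf0 : ∀ v, 0 ≤ f v) :
    ∑ w ∈ nonroots par, ∑ v ∈ subtree par w, f v ≤ Q * ∑ v, f v := by
  rw [sum_comm' (t' := univ) (s' := fun v => (nonroots par).filter fun w => v ∈ subtree par w)
    (by simp), mul_sum]
  refine sum_le_sum fun v _ => ?_
  rw [sum_const, nsmul_eq_mul]
  gcongr
  · exact hf0 v
  · exact_mod_cast hf.card_ancestors_le_of_card_treeOf_le hQ v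

end IsRootedForest

end SmallTrees

section Boundary

variable {V E : Type*} [Fintype E] [DecidableEq V] {v0 v1 : E → V}

lemma sum_c1_apply (x : EuclideanSpace ℝ E) (S : Finset V) :
    ∑ v ∈ S, c1 v0 v1 x v
      = ∑ e, ((if v1 e ∈ S then x e else 0) - (if v0 e ∈ S then x e else 0)) := by
  change ∑ v ∈ S, ((∑ e ∈ univ.filter (v1 · = v), x e) - ∑ e ∈ univ.filter (v0 · = v), x e) = _
  rw [sum_sub_distrib, sum_fiberwise_eq_sum_filter univ S v1 x,
    sum_fiberwise_eq_sum_filter univ S v0 x, sum_sub_distrib, sum_filter, sum_filter]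

end Boundary

section Rooting

variable {V E : Type*} [Fintype V] [DecidableEq V] {v0 v1 : E → V}

/-- The multigraph `(v0, v1)` is a forest rooted by `par`: `edge v` joins each non-root `v`
to its parent, and every edge arises this way exactly once. -/
structure Rooting (v0 v1 : E → V) where
  par : V → V
  dep : V → ℕ
  edge : V → E
  isRootedForest : IsRootedForest par dep
  edge_ends : ∀ v, par v ≠ v →
    (v0 (edge v) = v ∧ v1 (edge v) = par v) ∨ (v0 (edge v) = par v ∧ v1 (edge v) = v)
  bijOn_edge : Set.BijOn edge (nonroots par) Set.univ

namespace Rooting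

variable (T : Rooting v0 v1) {K : Finset V} {Q : ℕ}

lemma edge_boundary_eq_zero {S : Finset V} {w : V} (hw : T.par w ≠ w)
    (hS : w ∈ S ↔ T.par w ∈ S) (a : ℝ) :
    (if v1 (T.edge w) ∈ S then a else 0) - (if v0 (T.edge w) ∈ S then a else 0) = 0 := by
  rcases T.edge_ends w hw with ⟨h0, h1⟩ | ⟨h0, h1⟩ <;> simp [h0, h1, hS]

lemma edge_boundary_sq {S : Finset V} {w : V} (hw : T.par w ≠ w) (hwS : w ∈ S)
    (hpS : T.par w ∉ S) (a : ℝ) :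
    ((if v1 (T.edge w) ∈ S then a else 0) - (if v0 (T.edge w) ∈ S then a else 0)) ^ 2
      = a ^ 2 := by
  rcases T.edge_ends w hw with ⟨h0, h1⟩ | ⟨h0, h1⟩ <;> simp [h0, h1, hwS, hpS]

variable [Fintype E]

lemma sum_nonroots_edge {β : Type*} [AddCommMonoid β] (g : E → β) :
    ∑ w ∈ nonroots T.par, g (T.edge w) = ∑ e, g e :=
  sum_nbij T.edge (fun _ _ => mem_univ _) T.bijOn_edge.injOn
    (by simpa using T.bijOn_edge.surjOn) fun _ _ => rfl

lemma card_nonroots : (nonroots T.par).card = Fintype.card E := by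
  rw [card_eq_sum_ones, T.sum_nonroots_edge fun _ => 1, ← card_eq_sum_ones, card_univ]

lemma card_children_le (v : V) : (children T.par v).card ≤ maxDeg v0 v1 := by
  classical
  have hinj : Set.InjOn T.edge (children T.par v) := T.bijOn_edge.injOn.mono fun w hw => by
    obtain ⟨hpw, hwv⟩ := mem_children.1 hw
    exact mem_nonroots.2 (hpw.trans_ne (Ne.symm hwv))
  have hmaps : (children T.par v).image T.edge
      ⊆ univ.filter (v0 · = v) ∪ univ.filter (v1 · = v) := by
    intro e he
    obtain ⟨w, hw, rfl⟩ := mem_image.1 he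
    obtain ⟨hpw, hwv⟩ := mem_children.1 hw
    rcases T.edge_ends w (hpw.trans_ne (Ne.symm hwv)) with ⟨-, h⟩ | ⟨h, -⟩ <;> simp [h, hpw]
  calc (children T.par v).card = ((children T.par v).image T.edge).card :=
        (card_image_of_injOn hinj).symm
    _ ≤ vdeg v0 v1 v := (card_le_card hmaps).trans (card_union_le _ _)
    _ ≤ maxDeg v0 v1 := le_sup (mem_univ v)

/-- Summing `c1 x` over a vertex set counts the edges leaving it; of those leaving the subtree
of `u`, only the edge above `u` carries a nonzero value of `x`. -/
lemma sq_sum_c1_subtree_cut {x : EuclideanSpace ℝ E} (hx : ∀ u ∈ K, x (T.edge u) = 0) {u : V}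
    (hu : cut K T.par u ≠ u) :
    (∑ v ∈ subtree (cut K T.par) u, c1 v0 v1 x v) ^ 2 = x (T.edge u) ^ 2 := by
  obtain ⟨huK, hu⟩ := cut_ne_self_iff.1 hu
  have hcut : ∀ w ∉ K, cut K T.par w = T.par w := fun w hw => if_neg hw
  rw [sum_c1_apply, ← T.sum_nonroots_edge, sum_eq_single_of_mem u (mem_nonroots.2 hu)]
  · refine T.edge_boundary_sq hu (self_mem_subtree u) ?_ _
    rw [← hcut u huK]
    exact (T.isRootedForest.isRootedForest_cut K).parent_not_mem_subtree (hcut u huK ▸ hu)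
  · intro w hw hwu
    by_cases hwK : w ∈ K
    · simp [hx w hwK]
    · refine T.edge_boundary_eq_zero (mem_nonroots.1 hw) ?_ _
      rw [← hcut w hwK]
      exact mem_subtree_iff_parent_mem hwu

lemma norm_le_mul_norm_c1 (hQ : ∀ ρ, (treeOf (cut K T.par) T.dep ρ).card ≤ Q + 1)
    {x : EuclideanSpace ℝ E} (hx : ∀ u ∈ K, x (T.edge u) = 0) :
    ‖x‖ ≤ Q * ‖c1 v0 v1 x‖ := by
  have hf := T.isRootedForest.isRootedForest_cut K
  set y := c1 v0 v1 x
  have hterm : ∀ w ∈ nonroots (cut K T.par),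
      x (T.edge w) ^ 2 ≤ Q * ∑ v ∈ subtree (cut K T.par) w, y v ^ 2 := by
    intro w hw
    rw [← T.sq_sum_c1_subtree_cut hx (mem_nonroots.1 hw)]
    refine sq_sum_le_card_mul_sum_sq.trans ?_
    gcongr
    exact_mod_cast hf.card_subtree_le_of_card_treeOf_le hQ (mem_nonroots.1 hw)
  have hsq : ‖x‖ ^ 2 ≤ (Q * ‖y‖) ^ 2 := calc
    ‖x‖ ^ 2 = ∑ w ∈ nonroots T.par, x (T.edge w) ^ 2 := by
      simp [EuclideanSpace.norm_sq_eq, T.sum_nonroots_edge fun e => x e ^ 2]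
    _ = ∑ w ∈ nonroots (cut K T.par), x (T.edge w) ^ 2 := by
      rw [nonroots_cut]
      refine (sum_subset sdiff_subset fun w hw hwK => ?_).symm
      simp [hx w (by simpa [hw] using hwK)]
    _ ≤ Q * ∑ w ∈ nonroots (cut K T.par), ∑ v ∈ subtree (cut K T.par) w, y v ^ 2 := by
      rw [mul_sum]; exact sum_le_sum hterm
    _ ≤ Q * (Q * ∑ v, y v ^ 2) := by
      gcongr; exact hf.sum_sum_subtree_le hQ _ fun v => sq_nonneg _
    _ = (Q * ‖y‖) ^ 2 := by
      simp only [mul_pow, EuclideanSpace.norm_sq_eq, Real.norm_eq_abs, sq_abs]; ring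
  exact (pow_le_pow_iff_left₀ (norm_nonneg _) (by positivity) two_ne_zero).1 hsq

end Rooting

end Rooting

lemma SimpleGraph.Connected.exists_adj_dist_eq_add_one {V : Type*} {G : SimpleGraph V}
    (hG : G.Connected) (r : V) {v : V} (hv : v ≠ r) :
    ∃ u, G.Adj u v ∧ G.dist r u + 1 = G.dist r v := by
  obtain ⟨p, hp⟩ := (hG.preconnected v r).exists_walk_length_eq_dist
  cases p with
  | nil => exact absurd rfl hv
  | @cons _ u _ h q =>
    have hu : G.dist r u ≤ q.length := SimpleGraph.dist_comm.trans_le (SimpleGraph.dist_le q)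
    have hv : G.dist r v ≤ G.dist r u + G.dist u v := hG.dist_triangle
    rw [SimpleGraph.dist_eq_one_iff_adj.2 h.symm] at hv
    rw [SimpleGraph.Walk.length_cons, SimpleGraph.dist_comm] at hp
    exact ⟨u, h.symm, by omega⟩

section Construction

variable {V E : Type*} [Fintype V] [DecidableEq V] {v0 v1 : E → V}

lemma IsRootedForest.injOn_of_ends {par : V → V} {dep : V → ℕ} (hf : IsRootedForest par dep)
    {edge : V → E} (hends : ∀ v, par v ≠ v →
      (v0 (edge v) = v ∧ v1 (edge v) = par v) ∨ (v0 (edge v) = par v ∧ v1 (edge v) = v)) :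
    Set.InjOn edge (nonroots par) := by
  intro v hv w hw hvw
  have hv' := (hf v).resolve_left (mem_nonroots.1 hv)
  have hw' := (hf w).resolve_left (mem_nonroots.1 hw)
  rcases hends v (mem_nonroots.1 hv) with ⟨a0, a1⟩ | ⟨a0, a1⟩ <;>
    rcases hends w (mem_nonroots.1 hw) with ⟨b0, b1⟩ | ⟨b0, b1⟩ <;> rw [hvw] at a0 a1
  · exact a0.symm.trans b0
  · rw [a1.symm.trans b1] at hv'; rw [b0.symm.trans a0] at hw'; omega
  · rw [a0.symm.trans b0] at hv'; rw [b1.symm.trans a1] at hw'; omega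
  · exact a1.symm.trans b1

variable [Fintype E]

/-- Breadth-first search from a vertex `r` roots a tree: the parent of `v ≠ r` is a neighbour
one step closer to `r`. -/
lemma exists_rooting [Nonempty E] (hconn : (supportGraph v0 v1).Connected)
    (hcard : Fintype.card V = Fintype.card E + 1) : Nonempty (Rooting v0 v1) := by
  classical
  obtain ⟨r⟩ := hconn.nonempty
  let dep v := (supportGraph v0 v1).dist r v
  have hstep : ∀ v, v ≠ r → ∃ u e, dep u + 1 = dep v ∧
      ((v0 e = v ∧ v1 e = u) ∨ (v0 e = u ∧ v1 e = v)) := fun v hv => by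
    obtain ⟨u, ⟨-, e, he⟩, hu⟩ := hconn.exists_adj_dist_eq_add_one r hv
    exact ⟨u, e, hu, he.symm⟩
  choose pu pe hdep hends using hstep
  let par v := if h : v = r then v else pu v h
  let edge v := if h : v = r then Classical.arbitrary E else pe v h
  have hroot : ∀ v, par v ≠ v ↔ v ≠ r := fun v => by
    by_cases h : v = r
    · simp [par, h]
    · have := hdep v h
      simp only [par, h, dite_false, ne_eq, not_false_eq_true, iff_true]
      rintro hv; rw [hv] at this; omega
  have hf : IsRootedForest par dep := fun v => by
    by_cases h : v = r
    · simp [par, h]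
    · have := hdep v h; right; simp only [par, h, dite_false]; omega
  have hends' : ∀ v, par v ≠ v →
      (v0 (edge v) = v ∧ v1 (edge v) = par v) ∨ (v0 (edge v) = par v ∧ v1 (edge v) = v) :=
    fun v hv => by simpa [par, edge, (hroot v).1 hv] using hends v ((hroot v).1 hv)
  have hnonroots : nonroots par = univ.erase r := by
    ext v; simp [mem_nonroots, hroot]
  have hinj := hf.injOn_of_ends hends'
  refine ⟨⟨par, dep, edge, hf, hends', fun _ _ => Set.mem_univ _, hinj, ?_⟩⟩
  simpa using surjOn_of_injOn_of_card_le (t := univ) edge (fun _ _ => mem_coe.2 (mem_univ _))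
    hinj (by simp [hnonroots, hcard])

end Construction

lemma exists_mem_ne_zero_forall_eq_zero {ι : Type*} [Fintype ι]
    (U : Submodule ℝ (EuclideanSpace ℝ ι)) (F : Finset ι) (h : F.card < Module.finrank ℝ U) :
    ∃ x ∈ U, x ≠ 0 ∧ ∀ i ∈ F, x i = 0 := by
  let φ : U →ₗ[ℝ] F → ℝ := LinearMap.pi fun i =>
    (EuclideanSpace.proj (i : ι) : EuclideanSpace ℝ ι →L[ℝ] ℝ).toLinearMap ∘ₗ U.subtype
  obtain ⟨z, hz, hz0⟩ := (Submodule.ne_bot_iff _).1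
    (LinearMap.ker_ne_bot_of_finrank_lt (f := φ) (by simpa using h))
  exact ⟨z, z.2, by simpa using hz0, fun i hi => congrFun (LinearMap.mem_ker.1 hz) ⟨i, hi⟩⟩

lemma exists_submodule_finrank_eq_sdf {X Y : Type*} [NormedAddCommGroup X]
    [InnerProductSpace ℝ X] [FiniteDimensional ℝ X] [NormedAddCommGroup Y]
    [InnerProductSpace ℝ Y] (f : X →ₗ[ℝ] Y) (lam : ℝ) :
    ∃ U : Submodule ℝ X, Module.finrank ℝ U = sdf f lam ∧ ∀ x ∈ U, ‖f x‖ ≤ lam * ‖x‖ :=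
  Nat.sSup_mem
    (s := {n | ∃ U : Submodule ℝ X, Module.finrank ℝ U = n ∧ ∀ x ∈ U, ‖f x‖ ≤ lam * ‖x‖})
    ⟨0, ⊥, finrank_bot ℝ X, by simp⟩
    ⟨Module.finrank ℝ X, by rintro _ ⟨U, rfl, -⟩; exact U.finrank_le⟩

section Estimate

variable {V E : Type*} [Fintype V] [Fintype E] [DecidableEq V] {v0 v1 : E → V}

theorem Rooting.finrank_le_of_norm_c1_le (T : Rooting v0 v1) {d : ℕ}
    (hd : ∀ v, (children T.par v).card ≤ d) {lam : ℝ} (hlam : 0 ≤ lam)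
    (U : Submodule ℝ (EuclideanSpace ℝ E))
    (hU : ∀ x ∈ U, ‖c1 v0 v1 x‖ ≤ lam * ‖x‖) :
    (Module.finrank ℝ U : ℝ) ≤ Fintype.card E * d * lam := by
  classical
  set n := Module.finrank ℝ U
  set m := Fintype.card E
  rcases Nat.eq_zero_or_pos n with hn | hn
  · rw [hn, Nat.cast_zero]; positivity
  obtain ⟨K, hKcard, hK⟩ := T.isRootedForest.exists_cut_card_mul_le hd (m / n + 1)
  rw [T.card_nonroots] at hKcard
  have hKn : K.card < n :=
    Nat.lt_of_mul_lt_mul_right (hKcard.trans_lt (Nat.lt_mul_div_succ m hn))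
  obtain ⟨x, hxU, hx0, hxK⟩ :=
    exists_mem_ne_zero_forall_eq_zero U (K.image T.edge) (card_image_le.trans_lt hKn)
  set Q := d * (m / n)
  have hx : ‖x‖ ≤ Q * ‖c1 v0 v1 x‖ :=
    T.norm_le_mul_norm_c1 (fun ρ => by have := hK ρ; simp at this; omega)
      fun u hu => hxK _ (mem_image_of_mem _ hu)
  have hQ : 1 ≤ (Q : ℝ) * lam := by
    refine le_of_mul_le_mul_right ?_ (norm_pos_iff.2 hx0)
    calc 1 * ‖x‖ ≤ Q * ‖c1 v0 v1 x‖ := by rwa [one_mul]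
      _ ≤ Q * (lam * ‖x‖) := by gcongr; exact hU x hxU
      _ = Q * lam * ‖x‖ := by ring
  calc (n : ℝ) ≤ n * (Q * lam) := le_mul_of_one_le_right (Nat.cast_nonneg _) hQ
    _ = ((n * (m / n) : ℕ) : ℝ) * d * lam := by push_cast [Q]; ring
    _ ≤ m * d * lam := by gcongr; exact_mod_cast Nat.mul_div_le m n

lemma nonempty_of_maxDeg_ne_zero (h : maxDeg v0 v1 ≠ 0) : Nonempty E := by
  by_contra hE
  rw [not_nonempty_iff] at hE
  exact h (by simp [maxDeg, vdeg])

theorem sdf_c1_le [Nonempty E] (hconn : (supportGraph v0 v1).Connected)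
    (hcard : Fintype.card V = Fintype.card E + 1) {lam : ℝ} (hlam : 0 ≤ lam) :
    (sdf (c1 v0 v1) lam : ℝ) ≤ Fintype.card E * maxDeg v0 v1 * lam := by
  obtain ⟨T⟩ := exists_rooting hconn hcard
  obtain ⟨U, hU, hUlam⟩ := exists_submodule_finrank_eq_sdf (c1 v0 v1) lam
  rw [← hU]
  exact T.finrank_le_of_norm_c1_le T.card_children_le hlam U hUlam

end Estimate

theorem tree_sdf_estimate_general {V E : Type*} [Fintype V] [Fintype E] [DecidableEq V]
    (v0 v1 : E → V) (hconn : (supportGraph v0 v1).Connected)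
    (hcard : Fintype.card V = Fintype.card E + 1)
    (hdeg : 2 ≤ maxDeg v0 v1) (lam : ℝ)
    (h0 : 1 / (2 * ((Fintype.card E : ℝ) - 1) * (maxDeg v0 v1 : ℝ)) ≤ lam) :
    (sdf (c1 v0 v1) lam : ℝ) - (sdf (c1 v0 v1) 0 : ℝ) ≤
      2 * (Fintype.card E : ℝ) * (maxDeg v0 v1 : ℝ) * lam := by
  have : Nonempty E := nonempty_of_maxDeg_ne_zero (v0 := v0) (v1 := v1) (by omega)
  have hm : (0 : ℝ) ≤ (Fintype.card E : ℝ) - 1 :=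
    sub_nonneg.2 (by exact_mod_cast Fintype.card_pos)
  have hlam : 0 ≤ lam := (one_div_nonneg.2 (by positivity)).trans h0
  have hF := sdf_c1_le hconn hcard hlam
  have : 0 ≤ (Fintype.card E : ℝ) * maxDeg v0 v1 * lam := by positivity
  have : (0 : ℝ) ≤ sdf (c1 v0 v1) 0 := Nat.cast_nonneg _
  linarith

/-- For a finite tree T with deg(T) ≥ 2 and 1/(2·(|E(T)|−1)·deg(T)) ≤ λ < 1,
we have F₁(T)(λ) − F₁(T)(0) ≤ 2·|E(T)|·deg(T)·λ. -/
theorem tree_sdf_estimate {V E : Type*} [Fintype V] [Fintype E] [DecidableEq V]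
    (v0 v1 : E → V) (hconn : (supportGraph v0 v1).Connected)
    (hcard : Fintype.card V = Fintype.card E + 1)
    (hdeg : 2 ≤ maxDeg v0 v1) (lam : ℝ)
    (h0 : 1 / (2 * ((Fintype.card E : ℝ) - 1) * (maxDeg v0 v1 : ℝ)) ≤ lam)
    (h1 : lam < 1) :
    (sdf (c1 v0 v1) lam : ℝ) - (sdf (c1 v0 v1) 0 : ℝ) ≤
      2 * (Fintype.card E : ℝ) * (maxDeg v0 v1 : ℝ) * lam :=
  tree_sdf_estimate_general v0 v1 hconn hcard hdeg lam h0
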